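/- Let D be any set and Γ any set of real-valued cost functions over D. Then Imp(wPol(Γ)) = ℓExpr(Γ): the set of cost functions weight-improved by all weighted polymorphisms of Γ equals the local expressive power of Γ. -/

import Mathlib

open Finsupp

/-- A cost function of arity `r` over the domain `D`. -/
abbrev CostFn (D : Type*) (r : ℕ) := (Fin r → D) → ℝ

/-- A (finite-)valued language: a set of cost functions of arbitrary arities. -/
abbrev Lang (D : Type*) := Set (Σ r : ℕ, CostFn D r)

/-- The set of `k`-ary operations on `D`. -/
abbrev Op (D : Type*) (k : ℕ) := (Fin k → D) → D

/-- `f` is a `k`-ary projection. -/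
def IsProj {D : Type*} {k : ℕ} (f : Op D k) : Prop := ∃ i : Fin k, f = fun x => x i

/-- `M_k(Γ)`: pairs `(γ, S)` with `γ ∈ Γ` and `S` a matrix over `D` with `ar(γ)` rows
and `k` columns. -/
def MkIdx (D : Type*) (Γ : Lang D) (k : ℕ) :=
  Σ g : {g : Σ r : ℕ, CostFn D r // g ∈ Γ}, Fin g.1.1 → Fin k → D

/-- `Σ_{(S,γ)} λ(S,γ) · γ(f(S))`, where `f` is applied to `S` row-wise. -/
noncomputable def lamSum {D : Type*} {Γ : Lang D} {k : ℕ}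
    (lam : MkIdx D Γ k →₀ ℝ) (f : Op D k) : ℝ :=
  lam.sum fun p w => w * p.1.1.2 fun j => f (p.2 j)

/-- `ρ` belongs to the local expressive power of `Γ`. -/
def LExpr {D : Type*} (Γ : Lang D) {r : ℕ} (ρ : CostFn D r) : Prop :=
  ∀ ε : ℝ, 0 < ε → ∀ (k : ℕ) (x : Fin k → Fin r → D) (F : Finset (Op D k)),
    ∃ (lam : MkIdx D Γ k →₀ ℝ) (c : ℝ),
      (∀ p, 0 ≤ lam p) ∧
      (∀ i : Fin k, |ρ (x i) - (lamSum lam (fun v => v i) + c)| ≤ ε) ∧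
      (∀ f ∈ F, ρ (fun j => f fun i => x i j) ≤ lamSum lam f + c + ε)

/-- A `k`-ary weighting: finitely supported, total weight `0`, nonnegative on
non-projections. -/
def IsWeighting {D : Type*} {k : ℕ} (ω : Op D k →₀ ℝ) : Prop :=
  (ω.sum fun _ w => w) = 0 ∧ ∀ f : Op D k, ¬ IsProj f → 0 ≤ ω f

/-- `ω` weight-improves the cost function `ρ`. -/
def Improves {D : Type*} {k r : ℕ} (ω : Op D k →₀ ℝ) (ρ : CostFn D r) : Prop :=
  ∀ x : Fin k → Fin r → D,
    (ω.sum fun f w => w * ρ fun j => f fun i => x i j) ≤ 0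

/-- The weighted polymorphisms of `Γ`. -/
def wPol {D : Type*} (Γ : Lang D) : Set (Σ k : ℕ, Op D k →₀ ℝ) :=
  {ω | IsWeighting ω.2 ∧ ∀ γ ∈ Γ, Improves ω.2 γ.2}

/-- `ρ` is weight-improved by every weighting in `Ω`. -/
def Imp {D : Type*} (Ω : Set (Σ k : ℕ, Op D k →₀ ℝ)) {r : ℕ} (ρ : CostFn D r) : Prop :=
  ∀ ω ∈ Ω, Improves ω.2 ρ

/-- `σ` is an affine conical combination over `Γ`. -/
def AffConic {D : Type*} (Γ : Lang D) {n : ℕ} (σ : CostFn D n) : Prop :=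
  ∃ (m : ℕ) (γ : Fin m → {g : Σ r : ℕ, CostFn D r // g ∈ Γ})
    (s : ∀ j : Fin m, Fin (γ j).1.1 → Fin n) (lam : Fin m → ℚ) (c : ℚ),
    (∀ j, 0 ≤ lam j) ∧
    ∀ x : Fin n → D, σ x = (∑ j, (lam j : ℝ) * (γ j).1.2 fun i => x (s j i)) + (c : ℝ)

/-- `ρ` is expressible in `Γ` (i.e. `ρ ∈ ⟨Γ⟩`). -/
def Expressible {D : Type*} (Γ : Lang D) {r : ℕ} (ρ : CostFn D r) : Prop :=
  ∃ (n : ℕ) (w : Fin r → Fin n) (σ : CostFn D n), AffConic Γ σ ∧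
    ∀ x : Fin r → D,
      ρ x = ⨅ h : {h : Fin n → D // ∀ i, h (w i) = x i}, σ h.1

/-! Both inclusions are Farkas-type dualities in the finite-dimensional space `ℝ^(Fin k ⊕ F)`
whose coordinates are the `k` projections and the operations of a finite set `F`.
If `ρ ∈ ℓExpr(Γ)` and `ω ∈ wPol(Γ)`, replace `ρ` on the support of `ω` by an affine conic
combination of `Γ` up to `ε`: `ω` improves every `γ ∈ Γ` and has total weight `0`, so it improves
`ρ` up to an error `O(ε)`. Conversely, if the values of `ρ` at `f(x)` cannot be approximated, the
vector `(ρ(f(x)))_f` lies outside the closure of the cone of vectors below affine conic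
combinations of `Γ`; a separating functional `u` is exactly a weighting `Σ_f u_f [f]` that
improves all of `Γ` but not `ρ`. -/

lemma nonpos_of_forall_le_mul {a B : ℝ} (hB : 0 ≤ B) (h : ∀ ε > 0, a ≤ B * ε) : a ≤ 0 := by
  by_contra! ha
  have hlt : B * (a / (B + 1)) < a := by
    rw [mul_div_assoc', div_lt_iff₀ (by linarith)]
    nlinarith
  linarith [h _ (by positivity : a / (B + 1) > 0)]

lemma mul_le_mul_add_abs_mul_of_abs_sub_le {w a b ε : ℝ} (h : |a - b| ≤ ε) :
    w * a ≤ w * b + |w| * ε := by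
  have : w * (a - b) ≤ |w| * ε :=
    (le_abs_self _).trans ((abs_mul w _).trans_le (mul_le_mul_of_nonneg_left h (abs_nonneg w)))
  linarith

lemma mul_le_mul_add_abs_mul_of_le_add {w a b ε : ℝ} (hw : 0 ≤ w) (h : a ≤ b + ε) :
    w * a ≤ w * b + |w| * ε := by
  rw [abs_of_nonneg hw]
  nlinarith

section Farkas

variable {P α β : Type*} [Fintype α] [Fintype β]

def belowAffConic (v : P → α ⊕ β → ℝ) : PointedCone ℝ (α ⊕ β → ℝ) where
  carrier := {z | ∃ lam : P →₀ ℝ, (∀ p, 0 ≤ lam p) ∧ ∃ (c : ℝ) (t : β → ℝ), (∀ b, 0 ≤ t b) ∧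
    z = Finsupp.linearCombination ℝ v lam + (fun _ => c) - Sum.elim (0 : α → ℝ) t}
  zero_mem' := ⟨0, fun _ => le_rfl, 0, 0, fun _ => le_rfl, by ext (_ | _) <;> simp⟩
  add_mem' := by
    rintro _ _ ⟨l₁, hl₁, c₁, t₁, ht₁, rfl⟩ ⟨l₂, hl₂, c₂, t₂, ht₂, rfl⟩
    refine ⟨l₁ + l₂, fun p => add_nonneg (hl₁ p) (hl₂ p), c₁ + c₂, t₁ + t₂,
      fun b => add_nonneg (ht₁ b) (ht₂ b), ?_⟩
    ext (_ | _) <;> simp <;> ring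
  smul_mem' := by
    rintro ⟨s, hs⟩ _ ⟨l, hl, c, t, ht, rfl⟩
    refine ⟨s • l, fun p => mul_nonneg hs (hl p), s * c, s • t, fun b => mul_nonneg hs (ht b), ?_⟩
    ext (_ | _) <;> simp [mul_add, mul_sub]

lemma mem_closure_belowAffConic (v : P → α ⊕ β → ℝ) (y : α ⊕ β → ℝ)
    (hy : ∀ u : α ⊕ β → ℝ, ∑ i, u i = 0 → (∀ b, 0 ≤ u (.inr b)) →
      (∀ p, ∑ i, u i * v p i ≤ 0) → ∑ i, u i * y i ≤ 0) :
    y ∈ closure (belowAffConic v : Set (α ⊕ β → ℝ)) := by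
  classical
  by_contra hyK
  obtain ⟨f, hfK, hfy⟩ := ProperCone.hyperplane_separation_point
    (Submodule.closure (belowAffConic v)) hyK
  have hfK' : ∀ z ∈ belowAffConic v, 0 ≤ f z := fun z hz => hfK z (subset_closure hz)
  set u : α ⊕ β → ℝ := fun i => -f (Pi.single i 1)
  have hf : ∀ z, f z = -∑ i, u i * z i := fun z => by
    rw [show f z = (f : (α ⊕ β → ℝ) →ₗ[ℝ] ℝ) z from rfl, LinearMap.pi_apply_eq_sum_univ]
    simp only [u, neg_mul, Finset.sum_neg_distrib, neg_neg, smul_eq_mul]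
    refine Finset.sum_congr rfl fun i _ => ?_
    rw [mul_comm]
    exact congrArg (· * z i) (congrArg f (funext fun j => by simp [Pi.single_apply, eq_comm]))
  -- The free constant `c` forces `∑ i, u i = 0`; the slack `t` forces `u ≥ 0` on `β`.
  have hconst : ∀ c : ℝ, (fun _ => c) ∈ belowAffConic v := fun c =>
    ⟨0, fun _ => le_rfl, c, 0, fun _ => le_rfl, by ext (_ | _) <;> simp⟩
  have hu_sum : ∑ i, u i = 0 := by
    have h₁ := hfK' _ (hconst 1)
    have h₂ := hfK' _ (hconst (-1))
    simp only [hf, mul_one, mul_neg] at h₁ h₂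
    simp only [Finset.sum_neg_distrib] at h₂
    linarith
  have hu_inr : ∀ b, 0 ≤ u (.inr b) := fun b => by
    have := hfK' (-Pi.single (.inr b) 1)
      ⟨0, fun _ => le_rfl, 0, Pi.single b 1, fun b' => by
        rw [Pi.single_apply]; split_ifs <;> norm_num,
        by ext (_ | _) <;> simp [Pi.single_apply]⟩
    simpa [u] using this
  have hu_v : ∀ p, ∑ i, u i * v p i ≤ 0 := fun p => by
    have := hfK' (v p)
      ⟨Finsupp.single p 1, fun q => Finsupp.single_nonneg.2 zero_le_one q,
        0, 0, fun _ => le_rfl, by ext (_ | _) <;> simp⟩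
    rw [hf] at this
    linarith
  have := hy u hu_sum hu_inr hu_v
  rw [hf] at hfy
  linarith

theorem exists_affConic_approx (v : P → α ⊕ β → ℝ) (y : α ⊕ β → ℝ)
    (hy : ∀ u : α ⊕ β → ℝ, ∑ i, u i = 0 → (∀ b, 0 ≤ u (.inr b)) →
      (∀ p, ∑ i, u i * v p i ≤ 0) → ∑ i, u i * y i ≤ 0)
    {ε : ℝ} (hε : 0 < ε) :
    ∃ (lam : P →₀ ℝ) (c : ℝ), (∀ p, 0 ≤ lam p) ∧
      (∀ a, |y (.inl a) - (Finsupp.linearCombination ℝ v lam (.inl a) + c)| ≤ ε) ∧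
      ∀ b, y (.inr b) ≤ Finsupp.linearCombination ℝ v lam (.inr b) + c + ε := by
  obtain ⟨z, ⟨lam, hlam, c, t, ht, rfl⟩, hyz⟩ :=
    Metric.mem_closure_iff.1 (mem_closure_belowAffConic v y hy) ε hε
  have hclose := (dist_pi_lt_iff hε).1 hyz
  refine ⟨lam, c, hlam, fun a => by simpa [Real.dist_eq] using (hclose (.inl a)).le, fun b => ?_⟩
  have := (abs_lt.1 (Real.dist_eq _ _ ▸ hclose (.inr b))).2
  simp only [Pi.sub_apply, Pi.add_apply, Sum.elim_inr] at this
  linarith [ht b]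

end Farkas

section TestOperations

variable {D : Type*} {k : ℕ} (F : Finset (Op D k))

def testOp : Fin k ⊕ F → Op D k := Sum.elim (fun i x => x i) Subtype.val

def testProfile {m : ℕ} (σ : CostFn D m) (x : Fin k → Fin m → D) : Fin k ⊕ F → ℝ :=
  fun i => σ fun j => testOp F i fun l => x l j

noncomputable def weightingOf (u : Fin k ⊕ F → ℝ) : Op D k →₀ ℝ :=
  ∑ i, Finsupp.single (testOp F i) (u i)

variable {F}

lemma weightingOf_sum_mul (u : Fin k ⊕ F → ℝ) (h : Op D k → ℝ) :
    ((weightingOf F u).sum fun f w => w * h f) = ∑ i, u i * h (testOp F i) := by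
  rw [weightingOf, ← Finsupp.sum_finsetSum_index (by simp) (by intros; ring)]
  simp

lemma isWeighting_weightingOf {u : Fin k ⊕ F → ℝ} (hu : ∑ i, u i = 0)
    (hF : ∀ f, 0 ≤ u (.inr f)) : IsWeighting (weightingOf F u) := by
  classical
  refine ⟨?_, fun f hf => ?_⟩
  · simpa only [mul_one, hu] using weightingOf_sum_mul u fun _ => 1
  rw [weightingOf, Finsupp.finsetSum_apply]
  refine Finset.sum_nonneg fun i _ => ?_
  rcases i with i | f'
  · have : (fun x : Fin k → D => x i) ≠ f := fun h => hf ⟨i, h.symm⟩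
    simp [testOp, this]
  · simp only [testOp, Sum.elim_inr, Finsupp.single_apply]
    split_ifs
    exacts [hF f', le_rfl]

lemma improves_weightingOf_iff {u : Fin k ⊕ F → ℝ} {m : ℕ} {σ : CostFn D m} :
    Improves (weightingOf F u) σ ↔ ∀ x, ∑ i, u i * testProfile F σ x i ≤ 0 := by
  simp only [Improves, weightingOf_sum_mul, testProfile]

-- `MkIdx` stores the matrix `S` row by row, while `x` lists the `k` tuples column by column.
lemma linearCombination_testProfile {Γ : Lang D} (lam : MkIdx D Γ k →₀ ℝ) (i : Fin k ⊕ F) :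
    Finsupp.linearCombination ℝ (fun p : MkIdx D Γ k => testProfile F p.1.1.2 fun l j => p.2 j l)
      lam i = lamSum lam (testOp F i) := by
  simp [Finsupp.linearCombination_apply, lamSum, Finsupp.sum, Finset.sum_apply, testProfile]

end TestOperations

lemma lExpr_of_imp_wPol {D : Type*} {Γ : Lang D} {r : ℕ} {ρ : CostFn D r}
    (h : Imp (wPol Γ) ρ) : LExpr Γ ρ := by
  intro ε hε k x F
  obtain ⟨lam, c, hlam, hproj, hF⟩ := exists_affConic_approx
    (fun p : MkIdx D Γ k => testProfile F p.1.1.2 fun l j => p.2 j l) (testProfile F ρ x)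
    (fun u hu hu_inr hu_v => improves_weightingOf_iff.1
      (h ⟨k, weightingOf F u⟩ ⟨isWeighting_weightingOf hu hu_inr, fun γ hγ =>
        improves_weightingOf_iff.2 fun x' => hu_v ⟨⟨γ, hγ⟩, fun j l => x' l j⟩⟩) x) hε
  simp only [linearCombination_testProfile] at hproj hF
  exact ⟨lam, c, hlam, hproj, fun f hf => hF ⟨f, hf⟩⟩

lemma sum_mul_lamSum_nonpos {D : Type*} {Γ : Lang D} {k : ℕ} {ω : Op D k →₀ ℝ}
    (hω : ∀ γ ∈ Γ, Improves ω γ.2) {lam : MkIdx D Γ k →₀ ℝ} (hlam : ∀ p, 0 ≤ lam p) :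
    (ω.sum fun f w => w * lamSum lam f) ≤ 0 := by
  simp only [lamSum, Finsupp.mul_sum]
  rw [Finsupp.sum_comm]
  refine Finset.sum_nonpos fun p _ => ?_
  have hp := hω p.1.1 p.1.2 fun l j => p.2 j l
  calc (ω.sum fun f w => w * (lam p * p.1.1.2 fun j => f (p.2 j)))
      = lam p * ω.sum fun f w => w * p.1.1.2 fun j => f (p.2 j) := by
        rw [Finsupp.mul_sum]; exact Finsupp.sum_congr fun _ _ => by ring
    _ ≤ 0 := mul_nonpos_of_nonneg_of_nonpos (hlam p) hp

lemma imp_wPol_of_lExpr {D : Type*} {Γ : Lang D} {r : ℕ} {ρ : CostFn D r}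
    (h : LExpr Γ ρ) : Imp (wPol Γ) ρ := by
  rintro ⟨k, ω⟩ ⟨⟨hω_sum, hω_nonneg⟩, hωΓ⟩ x
  refine nonpos_of_forall_le_mul (B := ω.sum fun _ w => |w|)
    (Finset.sum_nonneg fun _ _ => abs_nonneg _) fun ε hε => ?_
  obtain ⟨lam, c, hlam, hproj, hF⟩ := h ε hε k x ω.support
  have hpt : ∀ f ∈ ω.support, ω f * ρ (fun j => f fun i => x i j)
      ≤ ω f * (lamSum lam f + c) + |ω f| * ε := fun f hf => by
    by_cases hp : IsProj f
    · obtain ⟨i, rfl⟩ := hp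
      exact mul_le_mul_add_abs_mul_of_abs_sub_le (hproj i)
    · exact mul_le_mul_add_abs_mul_of_le_add (hω_nonneg f hp) (hF f hf)
  calc (ω.sum fun f w => w * ρ fun j => f fun i => x i j)
      ≤ ω.sum fun f w => w * (lamSum lam f + c) + |w| * ε := Finset.sum_le_sum hpt
    _ = (ω.sum fun f w => w * lamSum lam f) + (ω.sum fun _ w => w) * c
        + (ω.sum fun _ w => |w|) * ε := by
      simp only [Finsupp.sum, Finset.sum_add_distrib, Finset.sum_mul, mul_add]
    _ ≤ (ω.sum fun _ w => |w|) * ε := by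
      rw [hω_sum]
      linarith [sum_mul_lamSum_nonpos hωΓ hlam]

/-- Main theorem: for any set `D` and any set `Γ` of cost functions over `D`,
`Imp(wPol(Γ)) = ℓExpr(Γ)`. -/
theorem imp_wPol_eq_lExpr (D : Type*) (Γ : Lang D) (r : ℕ) (ρ : CostFn D r) :
    Imp (wPol Γ) ρ ↔ LExpr Γ ρ :=
  ⟨lExpr_of_imp_wPol, imp_wPol_of_lExpr⟩
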